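/- Let (V, P) and (V', P') be path complexes and f : (V, P) → (V', P') a weak morphism. Then the induced map on regular chains restricts to the ∂-invariant chains, i.e. f_*(Ω_n(P)) ⊆ Ω_n(P') for every n, giving a chain map f_* : Ω_*(P) → Ω_*(P') (∂∘f_* = f_*∘∂), and hence f induces homomorphisms f_* : H_n(P) → H_n(P') on path homology for every n. -/

import Mathlib

/-!
STATEMENT 8: Let (V, P) and (V', P') be path complexes and f : (V, P) → (V', P') a weak
morphism.  Then the induced map on regular chains restricts to the ∂-invariant chains,
f_*(Ω_n(P)) ⊆ Ω_n(P') for every n, giving a chain map f_* : Ω_*(P) → Ω_*(P')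
(∂∘f_* = f_*∘∂), and hence f induces homomorphisms f_* : H_n(P) → H_n(P') on path
homology for every n (characterized on classes of cycles by h([z]) = [f_* z]).
-/

open scoped Classical

namespace PH

/-- An elementary path (a list of vertices) is regular if no two consecutive
vertices coincide. -/
def Reg {V : Type} (l : List V) : Prop := l.Chain' (· ≠ ·)

/-- The regular boundary operator ∂ on the span of regular paths (all degrees at once,
with the convention that ∂ vanishes on 0-paths): on a basis path `p` of length ≥ 2 it is
the alternating sum of the vertex deletions, with non-regular terms replaced by 0. -/
noncomputable def dReg (K : Type) [Field K] (V : Type) :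
    (List V →₀ K) →ₗ[K] (List V →₀ K) :=
  Finsupp.lsum K fun p => LinearMap.toSpanSingleton K (List V →₀ K)
    (if 2 ≤ p.length then
      ∑ q : Fin p.length, ((-1 : K) ^ (q : ℕ)) •
        (if Reg (p.eraseIdx (q : ℕ)) then Finsupp.single (p.eraseIdx (q : ℕ)) (1 : K) else 0)
    else 0)

/-- The map induced on regular chains by a vertex map f:
`e_{i₀…iₙ} ↦ e_{f(i₀)…f(iₙ)}` if the image path is regular, and 0 otherwise. -/
noncomputable def find (K : Type) [Field K] {V W : Type} (f : V → W) :
    (List V →₀ K) →ₗ[K] (List W →₀ K) :=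
  Finsupp.lsum K fun p => LinearMap.toSpanSingleton K (List W →₀ K)
    (if Reg (p.map f) then Finsupp.single (p.map f) (1 : K) else 0)

/-- `A_n(P)`: the span of the regular allowed n-paths (lists of n+1 vertices in P). -/
def Asub (K : Type) [Field K] {V : Type} (P : Set (List V)) (n : ℕ) :
    Submodule K (List V →₀ K) :=
  Finsupp.supported K K {l | l ∈ P ∧ l.length = n + 1 ∧ Reg l}

/-- `Ω_n(P)`: the ∂-invariant allowed regular n-chains. -/
noncomputable def OmegaSub (K : Type) [Field K] {V : Type} (P : Set (List V)) (n : ℕ) :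
    Submodule K (List V →₀ K) :=
  Asub K P n ⊓ Submodule.comap (dReg K V) (Asub K P (n - 1))

/-- The n-cycles of Ω_*(P). -/
noncomputable def Zsub (K : Type) [Field K] {V : Type} (P : Set (List V)) (n : ℕ) :
    Submodule K (List V →₀ K) :=
  OmegaSub K P n ⊓ LinearMap.ker (dReg K V)

/-- The n-boundaries ∂Ω_{n+1}(P). -/
noncomputable def Bsub (K : Type) [Field K] {V : Type} (P : Set (List V)) (n : ℕ) :
    Submodule K (List V →₀ K) :=
  Submodule.map (dReg K V) (OmegaSub K P (n + 1))

/-- Path homology `H_n(P)`, realized as the image of the n-cycles in the quotient of the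
ambient space by the n-boundaries (so `H_n(P) ≅ Z_n/(Z_n ∩ B_n) = Z_n/B_n`). -/
noncomputable def Hsm (K : Type) [Field K] {V : Type} (P : Set (List V)) (n : ℕ) :
    Submodule K ((List V →₀ K) ⧸ Bsub K P n) :=
  Submodule.map (Bsub K P n).mkQ (Zsub K P n)

/-- A path complex on V: a set of non-empty elementary paths (lists) closed under
removing the last (`dropLast`) or the first (`tail`) vertex. -/
structure PathComplex (V : Type) where
  carrier : Set (List V)
  not_nil : ∀ p ∈ carrier, p ≠ []
  dropLast_mem : ∀ p ∈ carrier, 2 ≤ p.length → p.dropLast ∈ carrier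
  tail_mem : ∀ p ∈ carrier, 2 ≤ p.length → p.tail ∈ carrier

end PH

namespace PH

/-- A weak morphism of path complexes: the image of every allowed path is allowed or
non-regular. -/
def IsWeakMor {V W : Type} (P : Set (List V)) (S : Set (List W)) (f : V → W) : Prop :=
  ∀ p ∈ P, p.map f ∈ S ∨ ¬ Reg (p.map f)

end PH

/-!
The induced map `f_*` commutes with `∂` on every basis path `e_p`. If `f(p)` is regular, the
faces of `p` go to the faces of `f(p)`, since a face whose image is regular is itself regular.
If `f(p)` is not regular, `f_*(∂ e_p)` is the alternating face sum of `f(p)`, which vanishes: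
a repeated adjacent vertex makes two faces cancel and every other face non-regular.
A weak morphism sends allowed regular paths to allowed paths or to `0`, so `f_*` preserves
`A_n`; with the chain-map identity it preserves `Ω_n`, cycles and boundaries, and so
descends to path homology.
-/
namespace PH

section Lists

variable {V W : Type}

theorem Reg.of_map (f : V → W) {l : List V} (h : Reg (l.map f)) : Reg l :=
  ((List.isChain_map f).1 h).imp fun _ _ hab e => hab (congrArg f e)

theorem eraseIdx_eq_eraseIdx_succ_of_getElem_eq :
    ∀ (l : List W) (k : ℕ) (h : k + 1 < l.length),
      l[k] = l[k + 1] → l.eraseIdx k = l.eraseIdx (k + 1)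
  | _ :: _ :: _, 0, _, he => by simp_all
  | _ :: t, k + 1, h, he => by
      rw [List.eraseIdx_cons_succ, List.eraseIdx_cons_succ,
        eraseIdx_eq_eraseIdx_succ_of_getElem_eq t k (by simpa using h) (by simpa using he)]

theorem not_reg_eraseIdx_of_getElem_eq (l : List W) {k j : ℕ} (hk : k + 1 < l.length)
    (he : l[k] = l[k + 1]) (hjk : j ≠ k) (hjk1 : j ≠ k + 1) (hj : j < l.length) :
    ¬ Reg (l.eraseIdx j) := by
  have hlen := List.length_eraseIdx_of_lt hj
  intro hreg
  have hchain := List.isChain_iff_getElem.mp hreg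
  rcases lt_or_gt_of_ne hjk with hlt | hgt
  · obtain ⟨m, rfl⟩ : ∃ m, k = m + 1 := ⟨k - 1, by omega⟩
    have hm := hchain m (by omega)
    rw [List.getElem_eraseIdx_of_ge _ (by omega), List.getElem_eraseIdx_of_ge _ (by omega)] at hm
    exact hm he
  · have hk' := hchain k (by omega)
    rw [List.getElem_eraseIdx_of_lt _ (by omega), List.getElem_eraseIdx_of_lt _ (by omega)] at hk'
    exact hk' he

end Lists

section Chains

variable (K : Type) [Field K] {V W : Type}

noncomputable def face (l : List W) (q : ℕ) : List W →₀ K :=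
  if Reg (l.eraseIdx q) then Finsupp.single (l.eraseIdx q) 1 else 0

/-- `∂ e_l` without the length guard of `dReg`. -/
noncomputable def faceSum (l : List W) : List W →₀ K :=
  ∑ q ∈ Finset.range l.length, (-1 : K) ^ q • face K l q

theorem dReg_single_one (p : List V) :
    dReg K V (Finsupp.single p 1) = if 2 ≤ p.length then faceSum K p else 0 := by
  rw [dReg, Finsupp.lsum_single, LinearMap.toSpanSingleton_apply_one]
  split_ifs
  · exact Fin.sum_univ_eq_sum_range (fun q => (-1 : K) ^ q • face K p q) p.length
  · rfl

theorem find_single_one (f : V → W) (p : List V) :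
    find K f (Finsupp.single p 1) =
      if Reg (p.map f) then Finsupp.single (p.map f) 1 else 0 := by
  rw [find, Finsupp.lsum_single, LinearMap.toSpanSingleton_apply_one]

/-- Faces `k` and `k + 1` of a path with `l[k] = l[k+1]` coincide and carry opposite signs;
every other face still contains the repetition, so is not regular. -/
theorem faceSum_eq_zero_of_not_reg {l : List W} (hl : ¬ Reg l) : faceSum K l = 0 := by
  obtain ⟨k, hk, he⟩ := List.exists_not_getElem_of_not_isChain hl
  rw [not_ne_iff] at he
  have hpair : ({k, k + 1} : Finset ℕ) ⊆ Finset.range l.length := by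
    intro x hx
    simp only [Finset.mem_insert, Finset.mem_singleton] at hx
    simp only [Finset.mem_range]
    omega
  rw [faceSum, ← Finset.sum_subset hpair]
  · rw [Finset.sum_pair (by omega), face, face,
      ← eraseIdx_eq_eraseIdx_succ_of_getElem_eq l k hk he, ← add_smul, pow_succ]
    simp
  · intro x hx hxk
    simp only [Finset.mem_range] at hx
    simp only [Finset.mem_insert, Finset.mem_singleton, not_or] at hxk
    rw [face, if_neg (not_reg_eraseIdx_of_getElem_eq l hk he hxk.1 hxk.2 hx), smul_zero]

theorem find_face (f : V → W) (l : List V) (q : ℕ) :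
    find K f (face K l q) = face K (l.map f) q := by
  rw [face, face, List.eraseIdx_map]
  by_cases hreg : Reg (l.eraseIdx q)
  · rw [if_pos hreg, find_single_one]
  · rw [if_neg hreg, if_neg (mt (Reg.of_map f) hreg), map_zero]

theorem find_faceSum (f : V → W) (l : List V) :
    find K f (faceSum K l) = faceSum K (l.map f) := by
  simp only [faceSum, map_sum, map_smul, find_face, List.length_map]

theorem dReg_comp_find (f : V → W) : dReg K W ∘ₗ find K f = find K f ∘ₗ dReg K V := by
  refine Finsupp.lhom_ext' fun p => LinearMap.ext_ring ?_
  simp only [LinearMap.comp_apply, Finsupp.lsingle_apply, find_single_one, dReg_single_one]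
  by_cases hreg : Reg (p.map f)
  · simp [hreg, dReg_single_one, apply_ite (find K f), find_faceSum]
  · simp [hreg, apply_ite (find K f), find_faceSum, faceSum_eq_zero_of_not_reg K hreg]

theorem dReg_find (f : V → W) (v : List V →₀ K) :
    dReg K W (find K f v) = find K f (dReg K V v) :=
  LinearMap.congr_fun (dReg_comp_find K f) v

end Chains

section Homology

variable (K : Type) [Field K] {V W : Type} {P : Set (List V)} {S : Set (List W)} {f : V → W}

theorem Asub_le_comap_find (hf : IsWeakMor P S f) (n : ℕ) :
    Asub K P n ≤ (Asub K S n).comap (find K f) := by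
  rw [Asub, Finsupp.supported_eq_span_single, Submodule.span_le]
  rintro _ ⟨p, ⟨hp, hlen, -⟩, rfl⟩
  rw [SetLike.mem_coe, Submodule.mem_comap, find_single_one]
  split_ifs with hreg
  · exact Finsupp.single_mem_supported K 1
      ⟨(hf p hp).resolve_right (not_not_intro hreg), by simp [hlen], hreg⟩
  · exact zero_mem _

theorem find_mem_OmegaSub (hf : IsWeakMor P S f) {n : ℕ} {v : List V →₀ K}
    (hv : v ∈ OmegaSub K P n) : find K f v ∈ OmegaSub K S n := by
  obtain ⟨hvA, hdvA⟩ := Submodule.mem_inf.mp hv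
  refine Submodule.mem_inf.mpr ⟨Asub_le_comap_find K hf n hvA, ?_⟩
  rw [Submodule.mem_comap, dReg_find]
  exact Asub_le_comap_find K hf (n - 1) hdvA

theorem find_mem_Zsub (hf : IsWeakMor P S f) {n : ℕ} {z : List V →₀ K}
    (hz : z ∈ Zsub K P n) : find K f z ∈ Zsub K S n := by
  obtain ⟨hzΩ, hcycle⟩ := Submodule.mem_inf.mp hz
  refine Submodule.mem_inf.mpr ⟨find_mem_OmegaSub K hf hzΩ, ?_⟩
  rw [LinearMap.mem_ker, dReg_find, LinearMap.mem_ker.mp hcycle, map_zero]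

theorem Bsub_le_comap_find (hf : IsWeakMor P S f) (n : ℕ) :
    Bsub K P n ≤ (Bsub K S n).comap (find K f) := by
  rintro _ ⟨w, hw, rfl⟩
  rw [Submodule.mem_comap, ← dReg_find]
  exact Submodule.mem_map_of_mem (find_mem_OmegaSub K hf hw)

noncomputable def homologyMap (hf : IsWeakMor P S f) (n : ℕ) : Hsm K P n →ₗ[K] Hsm K S n :=
  ((Bsub K P n).mapQ (Bsub K S n) (find K f) (Bsub_le_comap_find K hf n)).restrict <| by
    rintro _ ⟨z, hz, rfl⟩
    exact ⟨find K f z, find_mem_Zsub K hf hz, rfl⟩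

end Homology

end PH

theorem statement8_general (K : Type) [Field K] (V V' : Type)
    (P : PH.PathComplex V) (P' : PH.PathComplex V')
    (f : V → V') (hf : PH.IsWeakMor P.carrier P'.carrier f) :
    -- f_* restricts to the ∂-invariant chains
    (∀ (n : ℕ) (v : List V →₀ K), v ∈ PH.OmegaSub K P.carrier n →
        PH.find K f v ∈ PH.OmegaSub K P'.carrier n) ∧
    -- f_* : Ω_*(P) → Ω_*(P') is a chain map
    (∀ (n : ℕ) (v : List V →₀ K), v ∈ PH.OmegaSub K P.carrier n →
        PH.dReg K V' (PH.find K f v) = PH.find K f (PH.dReg K V v)) ∧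
    -- hence f induces homomorphisms on path homology, sending [z] to [f_* z]
    (∀ n : ℕ, ∃ h : PH.Hsm K P.carrier n →ₗ[K] PH.Hsm K P'.carrier n,
      ∀ (z : List V →₀ K) (hz : z ∈ PH.Zsub K P.carrier n)
        (hz' : PH.find K f z ∈ PH.Zsub K P'.carrier n),
        h ⟨(PH.Bsub K P.carrier n).mkQ z, Submodule.mem_map_of_mem hz⟩ =
          ⟨(PH.Bsub K P'.carrier n).mkQ (PH.find K f z),
            Submodule.mem_map_of_mem hz'⟩) :=
  ⟨fun _ _ hv => PH.find_mem_OmegaSub K hf hv,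
    fun _ v _ => PH.dReg_find K f v,
    fun n => ⟨PH.homologyMap K hf n, fun _ _ _ => rfl⟩⟩

theorem statement8 (K : Type) [Field K] (V V' : Type) [Fintype V] [Fintype V']
    (P : PH.PathComplex V) (P' : PH.PathComplex V')
    (h0 : ∀ v : V, [v] ∈ P.carrier) (h0' : ∀ v : V', [v] ∈ P'.carrier)
    (f : V → V') (hf : PH.IsWeakMor P.carrier P'.carrier f) :
    -- f_* restricts to the ∂-invariant chains
    (∀ (n : ℕ) (v : List V →₀ K), v ∈ PH.OmegaSub K P.carrier n →
        PH.find K f v ∈ PH.OmegaSub K P'.carrier n) ∧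
    -- f_* : Ω_*(P) → Ω_*(P') is a chain map
    (∀ (n : ℕ) (v : List V →₀ K), v ∈ PH.OmegaSub K P.carrier n →
        PH.dReg K V' (PH.find K f v) = PH.find K f (PH.dReg K V v)) ∧
    -- hence f induces homomorphisms on path homology, sending [z] to [f_* z]
    (∀ n : ℕ, ∃ h : PH.Hsm K P.carrier n →ₗ[K] PH.Hsm K P'.carrier n,
      ∀ (z : List V →₀ K) (hz : z ∈ PH.Zsub K P.carrier n)
        (hz' : PH.find K f z ∈ PH.Zsub K P'.carrier n),
        h ⟨(PH.Bsub K P.carrier n).mkQ z, Submodule.mem_map_of_mem hz⟩ =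
          ⟨(PH.Bsub K P'.carrier n).mkQ (PH.find K f z),
            Submodule.mem_map_of_mem hz'⟩) :=
  statement8_general K V V' P P' f hf
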